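/- arXiv:2605.25143 — 2 statements merged into one kernel-verified Lean document; each statement's English description precedes it below -/
import Mathlib

section
/- Let X be a finite set, π̃ : X → [0,∞) an unnormalized target with Σ_x π̃(x) > 0, and let q_new, q_hist be probability distributions on X with mixture q_mix = α q_new + (1−α) q_hist for some 0 < α < 1, such that π := π̃/Σπ̃ is absolutely continuous w.r.t. q_mix. Suppose q̃_new = Z·q_new and q̃_hist = Z·q_hist share a common normalizer Z > 0, and define F(x) = π̃(x)/q̃_mix(x) with q̃_mix = α q̃_new + (1−α) q̃_hist. Given N i.i.d. samples B from q_new and Nt i.i.d. samples S from q_hist (t a fixed positive integer), assign weights W(z) = α F(z) for z ∈ B and W(z) = (1−α)F(z)/t for z ∈ S. Then the self-normalized estimator ( Σ_{z ∈ B∪S} W(z) f(z) ) / ( Σ_{z ∈ B∪S} W(z) ) converges in probability to E_π[f] as N → ∞, for every f : X → ℝ. -/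
/-! The numerator and the denominator of the estimator, divided by `N`, are sums of two
empirical means, one over each block of samples. By the strong law of large numbers the
block of `N` new samples contributes `E_{q_new}[α F g]`, while the block of `N t` historical
samples contributes `t · E_{q_hist}[(1 - α) F g / t]`: the factor `1/t` in the weights
compensates exactly for the size of the block. The two limits add up to
`E_{q_mix}[F g] = Z⁻¹ ∑ₓ π̃(x) g(x)`, and the ratio of the limits for `g = f` and `g = 1`
is `E_π[f]`. Almost sure convergence then gives convergence in probability. -/

open Finset MeasureTheory ProbabilityTheory Filter Topology

lemma tendsto_sum_range_mul_div_natCast {a : ℕ → ℝ} {L : ℝ} {t : ℕ} (ht : 0 < t)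
    (h : Tendsto (fun n : ℕ => (∑ i ∈ range n, a i) / n) atTop (𝓝 L)) :
    Tendsto (fun n : ℕ => (∑ i ∈ range (n * t), a i) / n) atTop (𝓝 (t * L)) := by
  have hmul : Tendsto (· * t) atTop atTop := tendsto_id.atTop_mul_const' ht
  refine ((h.comp hmul).const_mul (t : ℝ)).congr' ?_
  filter_upwards [eventually_ne_atTop 0] with n hn
  have : (t : ℝ) ≠ 0 := by positivity
  simp only [Function.comp_apply, Nat.cast_mul]
  field_simp

lemma tendsto_div_of_tendsto_div_natCast {u v : ℕ → ℝ} {a b : ℝ}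
    (hu : Tendsto (fun n : ℕ => u n / n) atTop (𝓝 a))
    (hv : Tendsto (fun n : ℕ => v n / n) atTop (𝓝 b)) (hb : b ≠ 0) :
    Tendsto (fun n => u n / v n) atTop (𝓝 (a / b)) := by
  refine (hu.div hv hb).congr' ?_
  filter_upwards [eventually_ne_atTop 0] with n hn
  exact div_div_div_cancel_right₀ (Nat.cast_ne_zero.mpr hn) _ _

section StrongLaw

variable {X : Type*} [Fintype X] [MeasurableSpace X] [MeasurableSingletonClass X]
  {Ω : Type*} [MeasurableSpace Ω] {Pr : Measure Ω} [IsFiniteMeasure Pr] {q : X → ℝ}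

lemma integral_comp_eq_sum_of_law {Y : Ω → X} (hY : Measurable Y) (hq : ∀ x, 0 ≤ q x)
    (hlaw : ∀ x, Pr (Y ⁻¹' {x}) = ENNReal.ofReal (q x)) (g : X → ℝ) :
    ∫ ω, g (Y ω) ∂Pr = ∑ x, q x * g x := by
  rw [← integral_map hY.aemeasurable (measurable_of_countable g).aestronglyMeasurable,
    integral_fintype Integrable.of_finite]
  refine sum_congr rfl fun x _ => ?_
  rw [measureReal_def, Measure.map_apply hY (measurableSet_singleton x), hlaw,
    ENNReal.toReal_ofReal (hq x), smul_eq_mul]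

theorem strong_law_ae_of_law {Y : ℕ → Ω → X} (hY : ∀ i, Measurable (Y i))
    (hindep : Pairwise fun i j => Y i ⟂ᵢ[Pr] Y j) (hq : ∀ x, 0 ≤ q x)
    (hlaw : ∀ i x, Pr (Y i ⁻¹' {x}) = ENNReal.ofReal (q x)) (g : X → ℝ) :
    ∀ᵐ ω ∂Pr, Tendsto (fun n : ℕ => (∑ i ∈ range n, g (Y i ω)) / n) atTop
      (𝓝 (∑ x, q x * g x)) := by
  have hg : Measurable g := measurable_of_countable g
  have hmap : ∀ i, Pr.map (Y i) = Pr.map (Y 0) := fun i =>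
    Measure.ext_of_singleton fun x => by
      rw [Measure.map_apply (hY i) (measurableSet_singleton x),
        Measure.map_apply (hY 0) (measurableSet_singleton x), hlaw, hlaw]
  have hident : ∀ i, IdentDistrib (g ∘ Y i) (g ∘ Y 0) Pr Pr := fun i =>
    IdentDistrib.comp ⟨(hY i).aemeasurable, (hY 0).aemeasurable, hmap i⟩ hg
  have hint : Integrable (g ∘ Y 0) Pr :=
    (Integrable.of_finite (μ := Pr.map (Y 0))).comp_measurable (hY 0)
  have hlim := strong_law_ae_real (fun i => g ∘ Y i) hint
    (fun i j hij => (hindep hij).comp hg hg) hident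
  rwa [Function.comp_def, integral_comp_eq_sum_of_law (hY 0) hq (hlaw 0)] at hlim

theorem ae_tendsto_two_block_avg {p : X → ℝ} {Yb Yh : ℕ → Ω → X}
    (hmb : ∀ i, Measurable (Yb i)) (hmh : ∀ i, Measurable (Yh i))
    (hindb : Pairwise fun i j => Yb i ⟂ᵢ[Pr] Yb j) (hindh : Pairwise fun i j => Yh i ⟂ᵢ[Pr] Yh j)
    (hp : ∀ x, 0 ≤ p x) (hq : ∀ x, 0 ≤ q x)
    (hlawb : ∀ i x, Pr (Yb i ⁻¹' {x}) = ENNReal.ofReal (p x))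
    (hlawh : ∀ i x, Pr (Yh i ⁻¹' {x}) = ENNReal.ofReal (q x))
    {t : ℕ} (ht : 0 < t) (wb wh : X → ℝ) :
    ∀ᵐ ω ∂Pr, Tendsto
      (fun N : ℕ => ((∑ i ∈ range N, wb (Yb i ω)) + ∑ j ∈ range (N * t), wh (Yh j ω)) / N)
      atTop (𝓝 (∑ x, p x * wb x + t * ∑ x, q x * wh x)) := by
  filter_upwards [strong_law_ae_of_law hmb hindb hp hlawb wb,
    strong_law_ae_of_law hmh hindh hq hlawh wh] with ω hb hh
  simpa only [add_div] using hb.add (tendsto_sum_range_mul_div_natCast ht hh)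

end StrongLaw

lemma mul_importance_weight {qm πx Z : ℝ} (hZ : Z ≠ 0) (habs : qm = 0 → πx = 0) :
    qm * (if Z * qm = 0 then 0 else πx / (Z * qm)) = πx / Z := by
  by_cases hqm : qm = 0
  · simp [hqm, habs hqm]
  · rw [if_neg (mul_ne_zero hZ hqm)]
    field_simp

theorem stmt_9_general {X : Type*} [Fintype X] [mX : MeasurableSpace X]
    [MeasurableSingletonClass X]
    {Ω : Type*} [MeasurableSpace Ω] (Pr : Measure Ω) [IsProbabilityMeasure Pr]
    (πt : X → ℝ) (qnew qhist qmix π : X → ℝ) (α Z : ℝ) (t : ℕ) (ht : 1 ≤ t)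
    (f : X → ℝ)
    (hπtpos : 0 < ∑ x, πt x)
    (hqnew0 : ∀ x, 0 ≤ qnew x)
    (hqhist0 : ∀ x, 0 ≤ qhist x)
    (hZ : 0 < Z)
    (hqmix : ∀ x, qmix x = α * qnew x + (1 - α) * qhist x)
    (hπ : ∀ x, π x = πt x / ∑ y, πt y)
    (habs : ∀ x, qmix x = 0 → π x = 0)
    (F : X → ℝ)
    (hF : ∀ x, F x = if Z * qmix x = 0 then 0 else πt x / (Z * qmix x))
    (Xb Xh : ℕ → Ω → X)
    (hmb : ∀ i, Measurable (Xb i)) (hmh : ∀ i, Measurable (Xh i))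
    (hindep : iIndepFun (Sum.elim Xb Xh) Pr)
    (hlawb : ∀ i x, Pr (Xb i ⁻¹' {x}) = ENNReal.ofReal (qnew x))
    (hlawh : ∀ i x, Pr (Xh i ⁻¹' {x}) = ENNReal.ofReal (qhist x)) :
    TendstoInMeasure Pr
      (fun N ω =>
        ((∑ i ∈ Finset.range N, α * F (Xb i ω) * f (Xb i ω)) +
          ∑ j ∈ Finset.range (N * t), ((1 - α) * F (Xh j ω) / t) * f (Xh j ω)) /
        ((∑ i ∈ Finset.range N, α * F (Xb i ω)) +
          ∑ j ∈ Finset.range (N * t), (1 - α) * F (Xh j ω) / t))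
      atTop (fun _ => ∑ x, π x * f x) := by
  have hmixF : ∀ x, qmix x * F x = πt x / Z := fun x => by
    rw [hF]
    refine mul_importance_weight hZ.ne' fun h => ?_
    simpa [hπ, hπtpos.ne'] using habs x h
  have hlimit : ∀ g : X → ℝ, ∑ x, qnew x * (α * F x * g x) +
      t * ∑ x, qhist x * ((1 - α) * F x / t * g x) = (∑ x, πt x * g x) / Z := fun g => by
    have : (t : ℝ) ≠ 0 := by positivity
    rw [mul_sum, ← sum_add_distrib, sum_div]
    refine sum_congr rfl fun x _ => ?_
    rw [mul_div_right_comm (πt x), ← hmixF, hqmix]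
    field_simp
  have hindb : Pairwise fun i j => Xb i ⟂ᵢ[Pr] Xb j := fun i j hij =>
    hindep.indepFun (i := .inl i) (j := .inl j) (by simpa using hij)
  have hindh : Pairwise fun i j => Xh i ⟂ᵢ[Pr] Xh j := fun i j hij =>
    hindep.indepFun (i := .inr i) (j := .inr j) (by simpa using hij)
  have hae := ae_tendsto_two_block_avg hmb hmh hindb hindh hqnew0 hqhist0 hlawb hlawh ht
  have hFm : Measurable F := measurable_of_countable F
  have hfm : Measurable f := measurable_of_countable f
  refine tendstoInMeasure_of_tendsto_ae
    (fun N => (by fun_prop : Measurable _).aestronglyMeasurable) ?_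
  filter_upwards [hae (fun x => α * F x * f x) (fun x => (1 - α) * F x / t * f x),
    hae (fun x => α * F x) (fun x => (1 - α) * F x / t)] with ω hnum hden
  rw [hlimit] at hnum
  have hlimit_one := hlimit 1
  simp only [Pi.one_apply, mul_one] at hlimit_one
  rw [hlimit_one] at hden
  convert tendsto_div_of_tendsto_div_natCast hnum hden (by positivity) using 2
  rw [div_div_div_cancel_right₀ hZ.ne', sum_div]
  simp only [hπ, div_mul_eq_mul_div]

/-- Fixed-count mixture-proposal estimator of Power Backtrack SMC: with `N`
i.i.d. samples from `q_new`, `N·t` i.i.d. samples from `q_hist`, mixture-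
corrected weights `W = α·F` on new samples and `W = (1−α)·F/t` on historical
samples (where `F = π̃/q̃_mix` and `q̃_new = Z q_new`, `q̃_hist = Z q_hist` share
the normalizer `Z`), the self-normalized estimator converges in probability to
`E_π[f]` as `N → ∞`. -/
theorem stmt_9 {X : Type*} [Fintype X] [mX : MeasurableSpace X]
    [MeasurableSingletonClass X]
    {Ω : Type*} [MeasurableSpace Ω] (Pr : Measure Ω) [IsProbabilityMeasure Pr]
    (πt : X → ℝ) (qnew qhist qmix π : X → ℝ) (α Z : ℝ) (t : ℕ) (ht : 1 ≤ t)
    (f : X → ℝ)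
    (hπt0 : ∀ x, 0 ≤ πt x) (hπtpos : 0 < ∑ x, πt x)
    (hqnew0 : ∀ x, 0 ≤ qnew x) (hqnew1 : ∑ x, qnew x = 1)
    (hqhist0 : ∀ x, 0 ≤ qhist x) (hqhist1 : ∑ x, qhist x = 1)
    (hα0 : 0 < α) (hα1 : α < 1) (hZ : 0 < Z)
    (hqmix : ∀ x, qmix x = α * qnew x + (1 - α) * qhist x)
    (hπ : ∀ x, π x = πt x / ∑ y, πt y)
    (habs : ∀ x, qmix x = 0 → π x = 0)
    (F : X → ℝ)
    (hF : ∀ x, F x = if Z * qmix x = 0 then 0 else πt x / (Z * qmix x))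
    (Xb Xh : ℕ → Ω → X)
    (hmb : ∀ i, Measurable (Xb i)) (hmh : ∀ i, Measurable (Xh i))
    (hindep : iIndepFun (Sum.elim Xb Xh) Pr)
    (hlawb : ∀ i x, Pr (Xb i ⁻¹' {x}) = ENNReal.ofReal (qnew x))
    (hlawh : ∀ i x, Pr (Xh i ⁻¹' {x}) = ENNReal.ofReal (qhist x)) :
    TendstoInMeasure Pr
      (fun N ω =>
        ((∑ i ∈ Finset.range N, α * F (Xb i ω) * f (Xb i ω)) +
          ∑ j ∈ Finset.range (N * t), ((1 - α) * F (Xh j ω) / t) * f (Xh j ω)) /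
        ((∑ i ∈ Finset.range N, α * F (Xb i ω)) +
          ∑ j ∈ Finset.range (N * t), (1 - α) * F (Xh j ω) / t))
      atTop (fun _ => ∑ x, π x * f x) :=
  stmt_9_general (mX := mX) Pr πt qnew qhist qmix π α Z t ht f hπtpos hqnew0 hqhist0 hZ hqmix hπ
    habs F hF Xb Xh hmb hmh hindep hlawb hlawh
end

section
/- In Subpool Selection with pool size n, parent budget M, subpool size K = max(M, ⌊ρn⌋) with K < n, and any fixed element z of the pool that is NOT among the globally top-M scored elements: if fewer than M elements of the pool have score strictly greater than z within some size-K subset containing z, then z can be selected. Quantitatively, suppose exactly m ≥ M elements of the pool have score strictly greater than z. Then the probability that the uniformly random size-K subpool D contains z and at most M−1 of those m higher-scored elements is positive whenever K ≤ n − (m − M + 1); hence z has positive probability of being selected as a parent, in contrast to global Top-M selection, under which z is selected with probability 0. -/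
open Finset

/-- Extend `{z}` inside `B = s.filter (¬ p ·)` to `min K #B` elements, then inside `s` to `K`
elements: only the `K - min K #B ≤ a` elements added in the second step can satisfy `p`. -/
theorem Finset.exists_mem_card_eq_card_filter_le {α : Type*} [DecidableEq α] {s : Finset α}
    {p : α → Prop} [DecidablePred p] {z : α} (hz : z ∈ s) (hpz : ¬ p z) {K a : ℕ}
    (hK : 1 ≤ K) (hKs : K ≤ #s) (hKa : K ≤ #(s.filter (¬ p ·)) + a) :
    ∃ D ⊆ s, #D = K ∧ z ∈ D ∧ #(D.filter p) ≤ a := by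
  set B := s.filter (¬ p ·)
  have hzB : {z} ⊆ B := singleton_subset_iff.2 (mem_filter.2 ⟨hz, hpz⟩)
  have hB : 1 ≤ #B := card_le_card hzB
  obtain ⟨X, hzX, hXB, hX⟩ :=
    exists_subsuperset_card_eq hzB (by simpa using le_min hK hB) (min_le_right K #B)
  obtain ⟨D, hXD, hDs, hD⟩ :=
    exists_subsuperset_card_eq (hXB.trans (filter_subset _ s)) (hX ▸ min_le_left K #B) hKs
  have hblockers : D.filter p ⊆ D \ X := fun y hy => by
    obtain ⟨hyD, hpy⟩ := mem_filter.1 hy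
    exact mem_sdiff.2 ⟨hyD, fun hyX => (mem_filter.1 (hXB hyX)).2 hpy⟩
  refine ⟨D, hDs, hD, hXD (hzX (mem_singleton_self z)), ?_⟩
  calc #(D.filter p) ≤ #(D \ X) := card_le_card hblockers
    _ = K - min K #B := by rw [card_sdiff_of_subset hXD, hD, hX]
    _ ≤ a := by omega

theorem stmt_16_general {I : Type*} [LinearOrder I] [DecidableEq I]
    (P : Finset I) (n M K m : ℕ)
    (hn : P.card = n) (hM1 : 1 ≤ M) (hMK : M ≤ K)
    (z : I) (hz : z ∈ P)
    (hm : (P.filter (fun y => z < y)).card = m) (hmM : M ≤ m)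
    (hKb : K ≤ n - (m - M + 1)) :
    (¬ (P.filter (fun y => z < y)).card < M) ∧
    0 < ((P.powersetCard K).filter
          (fun D => z ∈ D ∧ (D.filter (fun y => z < y)).card ≤ M - 1)).card := by
  refine ⟨by omega, card_pos.2 ?_⟩
  have hsplit := card_filter_add_card_filter_not (s := P) (z < ·)
  obtain ⟨D, hDP, hD, hzD, hDblockers⟩ :=
    exists_mem_card_eq_card_filter_le (p := (z < ·)) (K := K) (a := M - 1) hz (lt_irrefl z)
      (by omega) (by omega) (by omega)
  exact ⟨D, mem_filter.2 ⟨mem_powersetCard.2 ⟨hDP, hD⟩, hzD, hDblockers⟩⟩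

/-- SPS breaks the blocker problem: let `z` be an element of the pool that is
outscored by exactly `m ≥ M` elements (so global Top-`M` never selects `z`).
If `K ≤ n − (m − M + 1)`, then with positive probability the uniformly random
size-`K` subpool contains `z` together with at most `M−1` of its blockers, so
`z` has positive probability of being selected as a parent, whereas under
global Top-`M` selection `z` is selected with probability `0`. -/
theorem stmt_16 {I : Type*} [LinearOrder I] [DecidableEq I]
    (P : Finset I) (n M K m : ℕ)
    (hn : P.card = n) (hM1 : 1 ≤ M) (hMK : M ≤ K) (hKn : K < n)
    (z : I) (hz : z ∈ P)
    (hm : (P.filter (fun y => z < y)).card = m) (hmM : M ≤ m)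
    (hKb : K ≤ n - (m - M + 1)) :
    (¬ (P.filter (fun y => z < y)).card < M) ∧
    0 < ((P.powersetCard K).filter
          (fun D => z ∈ D ∧ (D.filter (fun y => z < y)).card ≤ M - 1)).card :=
  stmt_16_general P n M K m hn hM1 hMK z hz hm hmM hKb
end
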